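/- Main convergence theorem (static reference): Let G = (V,E) be a finite digraph, F ∈ ℕ, A an F-local adversary set, L the leader set, N = V \ (L ∪ A) the normal agents. Suppose G is strongly (2F+1)-robust with respect to L. Let the normal agents update by W-MSR with parameter F with all weights bounded below by α ∈ (0,1), leaders hold the constant value C_L for all t ≥ t_C, and adversarial agents send arbitrary values. Then for every normal agent i, x_i(t) → C_L as t → ∞. -/

import Mathlib

/-!
After `tC`, let `M` bound the normal states from above, with `M ≥ CL`. A received value above
`M` can only come from an adversary, so by `F`-locality at most `F` of them exist and the
trimming discards all of them: the normal states stay below `M`. For a threshold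
`θ ∈ [CL, M]`, robustness applied to the normal agents above `θ` yields one of them with
`2F + 1` in-neighbours outside that set, hence `F + 1` truthful values at most `θ`; one of them
survives the trimming and, with weight at least `α`, pulls the agent to at most
`α θ + (1 - α) M`. Iterating once per normal agent contracts `M - CL` by the factor
`1 - α ^ #N`. The lower bound is the same argument applied to `-x`.
-/

open Finset

theorem Finset.sum_mul_le_of_forall_le_of_exists {ι : Type*} {T : Finset ι} {w v : ι → ℝ}
    {α θ B : ℝ} {j₀ : ι} (hα : 0 ≤ α) (hw : ∀ j ∈ T, α ≤ w j) (hsum : ∑ j ∈ T, w j = 1)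
    (hvB : ∀ j ∈ T, v j ≤ B) (hj₀ : j₀ ∈ T) (hvθ : v j₀ ≤ θ) (hθB : θ ≤ B) :
    ∑ j ∈ T, w j * v j ≤ α * θ + (1 - α) * B := by
  have hgap : B - ∑ j ∈ T, w j * v j = ∑ j ∈ T, w j * (B - v j) := by
    simp only [mul_sub, sum_sub_distrib, ← sum_mul, hsum, one_mul]
  have hj₀_le : w j₀ * (B - v j₀) ≤ ∑ j ∈ T, w j * (B - v j) :=
    single_le_sum (fun j hj => mul_nonneg (hα.trans (hw j hj)) (sub_nonneg.2 (hvB j hj))) hj₀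
  have : α * (B - θ) ≤ w j₀ * (B - v j₀) :=
    mul_le_mul (hw j₀ hj₀) (by linarith) (by linarith) (hα.trans (hw j₀ hj₀))
  linarith

section Step

variable {V : Type*} [DecidableEq V]

/-- `v j` is the value received from `j ∈ S`; the agent's own term enters the average as `v i`,
not as `xi`. -/
def IsWMSRStep (F : ℕ) (α : ℝ) (S : Finset V) (i : V) (xi : ℝ) (v : V → ℝ) (xi' : ℝ) : Prop :=
  ∃ (Dhi Dlo : Finset V) (w : V → ℝ),
    Dhi ⊆ {j ∈ S | xi < v j} ∧
    #Dhi = min F #{j ∈ S | xi < v j} ∧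
    (∀ j ∈ {j ∈ S | xi < v j} \ Dhi, ∀ b ∈ Dhi, v j ≤ v b) ∧
    Dlo ⊆ {j ∈ S | v j < xi} ∧
    #Dlo = min F #{j ∈ S | v j < xi} ∧
    (∀ j ∈ {j ∈ S | v j < xi} \ Dlo, ∀ b ∈ Dlo, v b ≤ v j) ∧
    (∀ j ∈ insert i (S \ (Dhi ∪ Dlo)), α ≤ w j) ∧
    (∑ j ∈ insert i (S \ (Dhi ∪ Dlo)), w j = 1) ∧
    xi' = ∑ j ∈ insert i (S \ (Dhi ∪ Dlo)), w j * v j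

variable {F : ℕ} {α : ℝ} {S : Finset V} {i : V} {xi xi' : ℝ} {v : V → ℝ}

theorem IsWMSRStep.neg (h : IsWMSRStep F α S i xi v xi') :
    IsWMSRStep F α S i (-xi) (-v) (-xi') := by
  obtain ⟨Dhi, Dlo, w, hhi, hhi_card, hhi_max, hlo, hlo_card, hlo_min, hw, hsum, hxi'⟩ := h
  refine ⟨Dlo, Dhi, w, ?_, ?_, ?_, ?_, ?_, ?_, ?_, ?_, ?_⟩ <;>
    simp only [Pi.neg_apply, neg_lt_neg_iff, neg_le_neg_iff, union_comm Dlo Dhi, hxi',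
      mul_neg, sum_neg_distrib] <;>
    assumption

/-- A value above `B` surviving the trimming would make `F + 1` received values above `B`. -/
theorem le_of_notMem_of_trim {D : Finset V} {B : ℝ}
    (hD : D ⊆ {j ∈ S | xi < v j}) (hD_card : #D = min F #{j ∈ S | xi < v j})
    (hD_max : ∀ j ∈ {j ∈ S | xi < v j} \ D, ∀ b ∈ D, v j ≤ v b)
    (hxiB : xi ≤ B) (hfew : #{j ∈ S | B < v j} ≤ F) {j : V} (hj : j ∈ S) (hjD : j ∉ D) :
    v j ≤ B := by
  by_contra! hBj
  have hj_high : j ∈ {j ∈ S | xi < v j} := mem_filter.2 ⟨hj, hxiB.trans_lt hBj⟩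
  have hD_full : #D = F := by
    rcases le_or_gt #{j ∈ S | xi < v j} F with hle | hgt
    · exact absurd (eq_of_subset_of_card_le hD (by omega) ▸ hj_high) hjD
    · omega
  have hsub : insert j D ⊆ {j ∈ S | B < v j} := by
    intro k hk
    rcases mem_insert.1 hk with rfl | hkD
    · exact mem_filter.2 ⟨hj, hBj⟩
    · exact mem_filter.2 ⟨(mem_filter.1 (hD hkD)).1,
        hBj.trans_le (hD_max j (mem_sdiff.2 ⟨hj_high, hjD⟩) k hkD)⟩
  have := card_le_card hsub
  rw [card_insert_of_notMem hjD] at this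
  omega

theorem exists_mem_retained_le {Dhi Dlo : Finset V} {θ : ℝ}
    (hhi : Dhi ⊆ {j ∈ S | xi < v j}) (hlo_card : #Dlo = min F #{j ∈ S | v j < xi})
    (hθ : xi ≤ θ ∨ F + 1 ≤ #{j ∈ S | v j ≤ θ}) (hvi : v i = xi) :
    ∃ j ∈ insert i (S \ (Dhi ∪ Dlo)), v j ≤ θ := by
  by_cases hxθ : xi ≤ θ
  · exact ⟨i, mem_insert_self _ _, hvi ▸ hxθ⟩
  have hlow : F + 1 ≤ #{j ∈ S | v j ≤ θ} := hθ.resolve_left hxθ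
  obtain ⟨j, hj_low, hjDlo⟩ : ∃ j ∈ {j ∈ S | v j ≤ θ}, j ∉ Dlo := by
    by_contra! hall
    have := card_le_card (show {j ∈ S | v j ≤ θ} ⊆ Dlo from hall)
    omega
  obtain ⟨hjS, hjθ⟩ := mem_filter.1 hj_low
  have hjDhi : j ∉ Dhi := fun hj => by
    have := (mem_filter.1 (hhi hj)).2
    linarith
  exact ⟨j, mem_insert_of_mem (mem_sdiff.2 ⟨hjS, by simp [hjDhi, hjDlo]⟩), hjθ⟩

theorem IsWMSRStep.le_of_card_gt_le (h : IsWMSRStep F α S i xi v xi') (hα : 0 ≤ α)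
    {θ B : ℝ} (hθB : θ ≤ B) (hxiB : xi ≤ B) (hfew : #{j ∈ S | B < v j} ≤ F)
    (hθ : xi ≤ θ ∨ F + 1 ≤ #{j ∈ S | v j ≤ θ}) (hvi : v i = xi) :
    xi' ≤ α * θ + (1 - α) * B := by
  obtain ⟨Dhi, Dlo, w, hhi, hhi_card, hhi_max, -, hlo_card, -, hw, hsum, rfl⟩ := h
  have hretained : ∀ j ∈ insert i (S \ (Dhi ∪ Dlo)), v j ≤ B := by
    intro j hj
    rcases mem_insert.1 hj with rfl | hj
    · exact hvi ▸ hxiB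
    · obtain ⟨hjS, hjD⟩ := mem_sdiff.1 hj
      exact le_of_notMem_of_trim hhi hhi_card hhi_max hxiB hfew hjS
        fun h => hjD (mem_union_left _ h)
  obtain ⟨j₀, hj₀, hj₀θ⟩ := exists_mem_retained_le hhi hlo_card hθ hvi
  exact sum_mul_le_of_forall_le_of_exists hα hw hsum hretained hj₀ hj₀θ hθB

end Step

def ContractsDownTo {ι : Type*} (N : Finset ι) (x : ℕ → ι → ℝ) (c α : ℝ) (t₀ : ℕ) : Prop :=
  ∀ t ≥ t₀, ∀ θ B, c ≤ θ → θ ≤ B → (∀ k ∈ N, x t k ≤ B) →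
    (∀ k ∈ N, x t k ≤ θ → x (t + 1) k ≤ α * θ + (1 - α) * B) ∧
    ((∃ k ∈ N, θ < x t k) → ∃ k ∈ N, θ < x t k ∧ x (t + 1) k ≤ α * θ + (1 - α) * B)

namespace ContractsDownTo

variable {ι : Type*} {N : Finset ι} {x : ℕ → ι → ℝ} {c α B : ℝ} {t₀ : ℕ}

theorem le_of_forall_le (h : ContractsDownTo N x c α t₀) {t : ℕ} (ht : t₀ ≤ t) (hcB : c ≤ B)
    (hB : ∀ k ∈ N, x t k ≤ B) {s : ℕ} (hts : t ≤ s) : ∀ k ∈ N, x s k ≤ B := by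
  induction s, hts using Nat.le_induction with
  | base => exact hB
  | succ s hts ih =>
    intro k hk
    have := (h s (ht.trans hts) B B hcB le_rfl ih).1 k hk (ih k hk)
    linarith

theorem card_gt_succ_le [DecidableEq ι] (h : ContractsDownTo N x c α t₀) {t m : ℕ}
    (ht : t₀ ≤ t) {θ : ℝ} (hcθ : c ≤ θ) (hθB : θ ≤ B) (hB : ∀ k ∈ N, x t k ≤ B)
    (hcard : #{k ∈ N | θ < x t k} ≤ m + 1) :
    #{k ∈ N | α * θ + (1 - α) * B < x (t + 1) k} ≤ m := by
  obtain ⟨hbelow, habove⟩ := h t ht θ B hcθ hθB hB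
  have hsub : {k ∈ N | α * θ + (1 - α) * B < x (t + 1) k} ⊆ {k ∈ N | θ < x t k} := by
    intro k hk
    obtain ⟨hkN, hk⟩ := mem_filter.1 hk
    exact mem_filter.2 ⟨hkN, lt_of_not_ge fun hkθ => hk.not_ge (hbelow k hkN hkθ)⟩
  by_cases hex : ∃ k ∈ N, θ < x t k
  · obtain ⟨k, hkN, hkθ, hk⟩ := habove hex
    have hsub' : {k ∈ N | α * θ + (1 - α) * B < x (t + 1) k} ⊆ {k ∈ N | θ < x t k}.erase k :=
      fun j hj => mem_erase.2 ⟨fun hjk => (mem_filter.1 (hjk ▸ hj)).2.not_ge hk, hsub hj⟩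
    have := card_le_card hsub'
    rw [card_erase_of_mem (mem_filter.2 ⟨hkN, hkθ⟩)] at this
    omega
  · have hempty : {k ∈ N | θ < x t k} = ∅ :=
      filter_eq_empty_iff.2 fun k hk hkθ => hex ⟨k, hk, hkθ⟩
    have := card_le_card hsub
    rw [hempty, card_empty] at this
    omega

/-- Each step lowers at least one more of the values above the threshold. -/
theorem le_of_card_gt_le [DecidableEq ι] (h : ContractsDownTo N x c α t₀) (hα0 : 0 ≤ α)
    (hα1 : α ≤ 1) (m : ℕ) : ∀ {t : ℕ} {θ B : ℝ}, t₀ ≤ t → c ≤ θ → θ ≤ B →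
      (∀ k ∈ N, x t k ≤ B) → #{k ∈ N | θ < x t k} ≤ m →
      ∀ k ∈ N, x (t + m) k ≤ α ^ m * θ + (1 - α ^ m) * B := by
  induction m with
  | zero =>
    intro t θ B _ _ _ _ hcard k hk
    simp only [card_eq_zero, Nat.le_zero, filter_eq_empty_iff, not_lt] at hcard
    simpa using hcard hk
  | succ m ih =>
    intro t θ B ht hcθ hθB hB hcard k hk
    have hnext := ih (t := t + 1) (θ := α * θ + (1 - α) * B) (B := B) (by omega)
      (by nlinarith) (by nlinarith) (h.le_of_forall_le ht (hcθ.trans hθB) hB (Nat.le_succ t))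
      (h.card_gt_succ_le ht hcθ hθB hB hcard) k hk
    rw [show t + 1 + m = t + (m + 1) by ring] at hnext
    linarith [show α ^ m * (α * θ + (1 - α) * B) + (1 - α ^ m) * B
      = α ^ (m + 1) * θ + (1 - α ^ (m + 1)) * B by ring]

theorem le_add_card (h : ContractsDownTo N x c α t₀) (hα0 : 0 ≤ α) (hα1 : α ≤ 1) {t : ℕ}
    (ht : t₀ ≤ t) (hcB : c ≤ B) (hB : ∀ k ∈ N, x t k ≤ B) :
    ∀ k ∈ N, x (t + #N) k ≤ c + (1 - α ^ #N) * (B - c) := by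
  classical
  intro k hk
  have := h.le_of_card_gt_le hα0 hα1 #N ht le_rfl hcB hB (card_filter_le _ _) k hk
  linarith

theorem le_of_add_mul_card (h : ContractsDownTo N x c α t₀) (hα0 : 0 ≤ α) (hα1 : α ≤ 1)
    (hcB : c ≤ B) (hB : ∀ k ∈ N, x t₀ k ≤ B) (m : ℕ) :
    ∀ k ∈ N, x (t₀ + m * #N) k ≤ c + (1 - α ^ #N) ^ m * (B - c) := by
  have hq : 0 ≤ 1 - α ^ #N := sub_nonneg.2 (pow_le_one₀ hα0 hα1)
  induction m with
  | zero => simpa using hB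
  | succ m ih =>
    have hcB' : c ≤ c + (1 - α ^ #N) ^ m * (B - c) :=
      le_add_of_nonneg_right (mul_nonneg (pow_nonneg hq m) (sub_nonneg.2 hcB))
    intro k hk
    have := h.le_add_card hα0 hα1 (Nat.le_add_right t₀ (m * #N)) hcB' ih k hk
    rw [add_assoc, ← Nat.succ_mul] at this
    linarith [show (1 - α ^ #N) * ((1 - α ^ #N) ^ m * (B - c))
      = (1 - α ^ #N) ^ (m + 1) * (B - c) by ring]

open Filter in
theorem eventually_lt (h : ContractsDownTo N x c α t₀) (hα0 : 0 < α) (hα1 : α ≤ 1) :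
    ∀ ⦃b⦄, c < b → ∀ᶠ t in atTop, ∀ k ∈ N, x t k < b := by
  intro b hcb
  obtain ⟨B₀, hB₀⟩ := (N.image (x t₀)).exists_le
  have hB : ∀ k ∈ N, x t₀ k ≤ max c B₀ := fun k hk =>
    le_max_of_le_right (hB₀ _ (mem_image_of_mem _ hk))
  have hq : 0 ≤ 1 - α ^ #N := sub_nonneg.2 (pow_le_one₀ hα0.le hα1)
  obtain ⟨m, hm⟩ := (((tendsto_pow_atTop_nhds_zero_of_lt_one hq
    (by linarith [pow_pos hα0 #N])).mul_const (max c B₀ - c)).eventually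
    (gt_mem_nhds (show (0 : ℝ) * (max c B₀ - c) < b - c by linarith))).exists
  have hcP : c ≤ c + (1 - α ^ #N) ^ m * (max c B₀ - c) :=
    le_add_of_nonneg_right (mul_nonneg (pow_nonneg hq m) (sub_nonneg.2 (le_max_left c B₀)))
  refine eventually_atTop.2 ⟨t₀ + m * #N, fun t ht k hk => ?_⟩
  have := h.le_of_forall_le (Nat.le_add_right _ _) hcP
    (h.le_of_add_mul_card hα0.le hα1 (le_max_left c B₀) hB m) ht k hk
  linarith

end ContractsDownTo

section Run

variable {V : Type*} [Fintype V] [DecidableEq V]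

/-- `y t i j` is the value that `j` sends to `i` at time `t`. -/
structure IsWMSRRun (F : ℕ) (α : ℝ) (L A : Finset V) (inb : V → Finset V) (x : ℕ → V → ℝ)
    (y : ℕ → V → V → ℝ) (CL : ℝ) (tC : ℕ) : Prop where
  robust : ∀ C : Finset V, C ⊆ univ \ L → C.Nonempty → ∃ i ∈ C, 2 * F + 1 ≤ #(inb i \ C)
  card_inter_adversary_le : ∀ i ∈ univ \ (L ∪ A), #(inb i ∩ A) ≤ F
  received_eq : ∀ t i j, j ∉ A → y t i j = x t j
  leader_eq : ∀ i ∈ L, ∀ t, tC ≤ t → x t i = CL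
  step : ∀ i ∈ univ \ (L ∪ A), ∀ t, IsWMSRStep F α (inb i) i (x t i) (y t i) (x (t + 1) i)

namespace IsWMSRRun

variable {F : ℕ} {α : ℝ} {L A : Finset V} {inb : V → Finset V} {x : ℕ → V → ℝ}
  {y : ℕ → V → V → ℝ} {CL : ℝ} {tC : ℕ}

theorem neg (h : IsWMSRRun F α L A inb x y CL tC) : IsWMSRRun F α L A inb (-x) (-y) (-CL) tC where
  robust := h.robust
  card_inter_adversary_le := h.card_inter_adversary_le
  received_eq t i j hj := congrArg Neg.neg (h.received_eq t i j hj)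
  leader_eq i hi t ht := congrArg Neg.neg (h.leader_eq i hi t ht)
  step i hi t := (h.step i hi t).neg

theorem le_of_notMem_adversary (h : IsWMSRRun F α L A inb x y CL tC) {t : ℕ}
    (ht : tC ≤ t) {B : ℝ} (hcB : CL ≤ B) (hB : ∀ k ∈ univ \ (L ∪ A), x t k ≤ B) {j : V}
    (hj : j ∉ A) : x t j ≤ B := by
  by_cases hjL : j ∈ L
  · exact h.leader_eq j hjL t ht ▸ hcB
  · exact hB j (by simp [hjL, hj])

theorem card_received_gt_le (h : IsWMSRRun F α L A inb x y CL tC) {t : ℕ} (ht : tC ≤ t)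
    {B : ℝ} (hcB : CL ≤ B) (hB : ∀ k ∈ univ \ (L ∪ A), x t k ≤ B) {i : V}
    (hi : i ∈ univ \ (L ∪ A)) : #{j ∈ inb i | B < y t i j} ≤ F := by
  refine le_trans (card_le_card fun j hj => ?_) (h.card_inter_adversary_le i hi)
  obtain ⟨hj, hBj⟩ := mem_filter.1 hj
  refine mem_inter.2 ⟨hj, by_contra fun hjA => ?_⟩
  rw [h.received_eq t i j hjA] at hBj
  exact hBj.not_ge (h.le_of_notMem_adversary ht hcB hB hjA)

theorem exists_card_received_le (h : IsWMSRRun F α L A inb x y CL tC) {t : ℕ} (ht : tC ≤ t)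
    {θ : ℝ} (hcθ : CL ≤ θ) (hex : ∃ k ∈ univ \ (L ∪ A), θ < x t k) :
    ∃ k ∈ univ \ (L ∪ A), θ < x t k ∧ F + 1 ≤ #{j ∈ inb k | y t k j ≤ θ} := by
  set C := {k ∈ univ \ (L ∪ A) | θ < x t k}
  have hC : C ⊆ univ \ L := fun k hk => by
    simp only [C, mem_filter, mem_sdiff, mem_union, not_or] at hk ⊢
    exact ⟨mem_univ k, hk.1.2.1⟩
  obtain ⟨k, hkC, hk_robust⟩ := h.robust C hC (by simpa only [C, filter_nonempty_iff] using hex)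
  obtain ⟨hk, hkθ⟩ := mem_filter.1 hkC
  have hsub : (inb k \ C) \ A ⊆ {j ∈ inb k | y t k j ≤ θ} := by
    intro j hj
    simp only [C, mem_sdiff, mem_filter, mem_univ, mem_union, not_or, true_and, not_and,
      not_lt] at hj
    obtain ⟨⟨hjk, hjC⟩, hjA⟩ := hj
    refine mem_filter.2 ⟨hjk, h.received_eq t k j hjA ▸ ?_⟩
    by_cases hjL : j ∈ L
    · exact h.leader_eq j hjL t ht ▸ hcθ
    · exact hjC ⟨hjL, hjA⟩
  have hadv : #((inb k \ C) ∩ A) ≤ F :=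
    (card_le_card (inter_subset_inter_right sdiff_subset)).trans (h.card_inter_adversary_le k hk)
  have := card_sdiff_add_card_inter (inb k \ C) A
  exact ⟨k, hk, hkθ, by have := card_le_card hsub; omega⟩

theorem contractsDownTo (h : IsWMSRRun F α L A inb x y CL tC) (hα : 0 ≤ α) :
    ContractsDownTo (univ \ (L ∪ A)) x CL α tC := by
  intro t ht θ B hcθ hθB hB
  have hstep : ∀ k ∈ univ \ (L ∪ A), x t k ≤ θ ∨ F + 1 ≤ #{j ∈ inb k | y t k j ≤ θ} →
      x (t + 1) k ≤ α * θ + (1 - α) * B := fun k hk hθ =>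
    (h.step k hk t).le_of_card_gt_le hα hθB (hB k hk)
      (h.card_received_gt_le ht (hcθ.trans hθB) hB hk) hθ
      (h.received_eq t k k fun hA => (mem_sdiff.1 hk).2 (mem_union_right L hA))
  refine ⟨fun k hk hkθ => hstep k hk (.inl hkθ), fun hex => ?_⟩
  obtain ⟨k, hk, hkθ, hcard⟩ := h.exists_card_received_le ht hcθ hex
  exact ⟨k, hk, hkθ, hstep k hk (.inr hcard)⟩

end IsWMSRRun

end Run

/-- Theorem 2 (main convergence theorem, static reference): in a digraph that
is strongly (2F+1)-robust w.r.t. the leader set L, with an F-local adversary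
set A, leaders holding the constant value C_L for t ≥ t_C, and normal agents
(V \ (L ∪ A)) updating by W-MSR with parameter F and weights bounded below by
α ∈ (0,1) (adversaries sending arbitrary, possibly Byzantine, values y), every
normal agent's state converges to C_L. -/
theorem wmsr_consensus_tracking {V : Type*} [Fintype V] [DecidableEq V]
    (F : ℕ) (α : ℝ) (hα0 : 0 < α) (hα1 : α < 1)
    (L A : Finset V) (inb : V → Finset V)
    (x : ℕ → V → ℝ) (y : ℕ → V → V → ℝ) (CL : ℝ) (tC : ℕ)
    (hrobust : ∀ C : Finset V, C ⊆ Finset.univ \ L → C.Nonempty →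
      ∃ i ∈ C, 2 * F + 1 ≤ ((inb i) \ C).card)
    (hlocal : ∀ i ∈ Finset.univ \ (L ∪ A), ((inb i) ∩ A).card ≤ F)
    (hy : ∀ t : ℕ, ∀ i j : V, j ∉ A → y t i j = x t j)
    (hldr : ∀ i ∈ L, ∀ t, tC ≤ t → x t i = CL)
    (hupdate : ∀ i ∈ Finset.univ \ (L ∪ A), ∀ t : ℕ,
      ∃ (Dhi Dlo : Finset V) (w : V → ℝ),
        Dhi ⊆ (inb i).filter (fun j => x t i < y t i j) ∧
        Dhi.card = min F (((inb i).filter (fun j => x t i < y t i j)).card) ∧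
        (∀ j ∈ (inb i).filter (fun j => x t i < y t i j) \ Dhi,
          ∀ b ∈ Dhi, y t i j ≤ y t i b) ∧
        Dlo ⊆ (inb i).filter (fun j => y t i j < x t i) ∧
        Dlo.card = min F (((inb i).filter (fun j => y t i j < x t i)).card) ∧
        (∀ j ∈ (inb i).filter (fun j => y t i j < x t i) \ Dlo,
          ∀ b ∈ Dlo, y t i b ≤ y t i j) ∧
        (∀ j ∈ insert i ((inb i) \ (Dhi ∪ Dlo)), α ≤ w j) ∧
        (∑ j ∈ insert i ((inb i) \ (Dhi ∪ Dlo)), w j = 1) ∧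
        x (t + 1) i = ∑ j ∈ insert i ((inb i) \ (Dhi ∪ Dlo)), w j * y t i j) :
    ∀ i ∈ Finset.univ \ (L ∪ A),
      Filter.Tendsto (fun t => x t i) Filter.atTop (nhds CL) := by
  intro i hi
  have hrun : IsWMSRRun F α L A inb x y CL tC := ⟨hrobust, hlocal, hy, hldr, hupdate⟩
  have hupper := (hrun.contractsDownTo hα0.le).eventually_lt hα0 hα1.le
  have hlower := (hrun.neg.contractsDownTo hα0.le).eventually_lt hα0 hα1.le
  refine tendsto_order.2 ⟨fun a ha => ?_, fun b hb => ?_⟩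
  · filter_upwards [hlower (neg_lt_neg ha)] with t ht using neg_lt_neg_iff.1 (ht i hi)
  · filter_upwards [hupper hb] with t ht using ht i hi
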